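/- arXiv:math/0604498 — 6 statements merged into one kernel-verified Lean document; each statement's English description precedes it below -/
import Mathlib

section
/- In U(sl2 ⋉ V), the element t = ey² + hxy − fx² is central. (This is the z = 0 case of the infinitesimal Hecke algebra central element.) -/
noncomputable section

open Polynomial

/-- Free algebra on generators e, h, f, x, y. -/
abbrev F5 : Type := FreeAlgebra ℂ (Fin 5)

def ge : F5 := FreeAlgebra.ι ℂ 0
def gh : F5 := FreeAlgebra.ι ℂ 1
def gf : F5 := FreeAlgebra.ι ℂ 2
def gx : F5 := FreeAlgebra.ι ℂ 3
def gy : F5 := FreeAlgebra.ι ℂ 4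

/-- The shifted Casimir element Δ = h² + 4ef − 2h (as a word in the free algebra). -/
def gΔ : F5 := gh * gh + 4 * (ge * gf) - 2 * gh

/-- Defining relations of the infinitesimal Hecke algebra H_z of sl₂:
sl₂ relations, the standard action on V = span(x,y), and [x,y] = z. -/
inductive HRel (z : F5) : F5 → F5 → Prop
  | he : HRel z (gh * ge) (ge * gh + 2 * ge)
  | hf : HRel z (gh * gf) (gf * gh - 2 * gf)
  | ef : HRel z (ge * gf) (gf * ge + gh)
  | ex : HRel z (ge * gx) (gx * ge)
  | ey : HRel z (ge * gy) (gy * ge + gx)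
  | fx : HRel z (gf * gx) (gx * gf + gy)
  | fy : HRel z (gf * gy) (gy * gf)
  | hx : HRel z (gh * gx) (gx * gh + gx)
  | hy : HRel z (gh * gy) (gy * gh - gy)
  | xy : HRel z (gx * gy) (gy * gx + z)

/-- The infinitesimal Hecke algebra H_z (for z = 0 this is U(sl₂ ⋉ V)). -/
abbrev Hz (z : F5) : Type := RingQuot (HRel z)

/-- Canonical projection from the free algebra. -/
def π (z : F5) : F5 →ₐ[ℂ] Hz z := RingQuot.mkAlgHom ℂ (HRel z)

namespace TCentralAux

def E : Hz 0 := π 0 ge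
def H : Hz 0 := π 0 gh
def F : Hz 0 := π 0 gf
def X : Hz 0 := π 0 gx
def Y : Hz 0 := π 0 gy

/-- The central element. -/
def T : Hz 0 := E * Y ^ 2 + H * X * Y - F * X ^ 2

lemma rel (a b : F5) (h : HRel 0 a b) : π 0 a = π 0 b :=
  RingQuot.mkAlgHom_rel ℂ h

lemma Dhe : H * E - (E * H + 2 * E) = 0 := by
  have := rel _ _ (HRel.he (z := 0))
  simp only [π, map_mul, map_add, map_ofNat] at this
  simp [E, H, π, this]

lemma Dhf : H * F - (F * H - 2 * F) = 0 := by
  have := rel _ _ (HRel.hf (z := 0))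
  simp only [π, map_mul, map_sub, map_ofNat] at this
  simp [F, H, π, this]

lemma Def : E * F - (F * E + H) = 0 := by
  have := rel _ _ (HRel.ef (z := 0))
  simp only [π, map_mul, map_add] at this
  simp [E, F, H, π, this]

lemma Dex : E * X - X * E = 0 := by
  have := rel _ _ (HRel.ex (z := 0))
  simp only [π, map_mul] at this
  simp [E, X, π, this]

lemma Dey : E * Y - (Y * E + X) = 0 := by
  have := rel _ _ (HRel.ey (z := 0))
  simp only [π, map_mul, map_add] at this
  simp [E, X, Y, π, this]

lemma Dfx : F * X - (X * F + Y) = 0 := by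
  have := rel _ _ (HRel.fx (z := 0))
  simp only [π, map_mul, map_add] at this
  simp [F, X, Y, π, this]

lemma Dfy : F * Y - Y * F = 0 := by
  have := rel _ _ (HRel.fy (z := 0))
  simp only [π, map_mul] at this
  simp [F, Y, π, this]

lemma Dhx : H * X - (X * H + X) = 0 := by
  have := rel _ _ (HRel.hx (z := 0))
  simp only [π, map_mul, map_add] at this
  simp [H, X, π, this]

lemma Dhy : H * Y - (Y * H - Y) = 0 := by
  have := rel _ _ (HRel.hy (z := 0))
  simp only [π, map_mul, map_sub] at this
  simp [H, Y, π, this]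

lemma Dxy : X * Y - Y * X = 0 := by
  have := rel _ _ (HRel.xy (z := 0))
  simp only [π, map_mul, map_add, map_zero, add_zero] at this
  simp [X, Y, π, this]

lemma comm_X : T * X = X * T := by
  rw [← sub_eq_zero]
  have key : T * X - X * T =
      -(E * Y * (X * Y - Y * X)) - E * (X * Y - Y * X) * Y
        + (E * X - X * E) * Y * Y - H * X * (X * Y - Y * X)
        + (H * X - (X * H + X)) * (X * Y) + (X * Y - Y * X) * X
        + X * (X * Y - Y * X) - (F * X - (X * F + Y)) * X * X := by
    unfold T; simp only [mul_add, add_mul, mul_sub, sub_mul, mul_assoc]; noncomm_ring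
  rw [key, Dxy, Dex, Dhx, Dfx]
  simp

lemma comm_Y : T * Y = Y * T := by
  rw [← sub_eq_zero]
  have key : T * Y - Y * T =
      (E * Y - (Y * E + X)) * Y * Y + H * (X * Y - Y * X) * Y
        + (X * Y - Y * X) * Y + (H * Y - (Y * H - Y)) * (X * Y)
        - F * X * (X * Y - Y * X) - F * (X * Y - Y * X) * X
        - (F * Y - Y * F) * X * X := by
    unfold T; simp only [mul_add, add_mul, mul_sub, sub_mul, mul_assoc]; noncomm_ring
  rw [key, Dxy, Dey, Dhy, Dfy]
  simp

lemma comm_E : T * E = E * T := by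
  rw [← sub_eq_zero]
  have key : T * E - E * T =
      E * (X * Y - Y * X) - E * (E * Y - (Y * E + X)) * Y
        - E * Y * (E * Y - (Y * E + X)) + (H * E - (E * H + 2 * E)) * (X * Y)
        - H * (E * X - X * E) * Y - H * X * (E * Y - (Y * E + X))
        + (E * F - (F * E + H)) * X * X + F * (E * X - X * E) * X
        + F * X * (E * X - X * E) := by
    unfold T; simp only [mul_add, add_mul, mul_sub, sub_mul, mul_assoc]; noncomm_ring
  rw [key, Dxy, Dey, Dhe, Dex, Def]
  simp

lemma comm_F : T * F = F * T := by
  rw [← sub_eq_zero]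
  have key : T * F - F * T =
      (E * F - (F * E + H)) * Y * Y - E * (F * Y - Y * F) * Y
        - E * Y * (F * Y - Y * F) + (H * F - (F * H - 2 * F)) * (X * Y)
        - H * (F * X - (X * F + Y)) * Y - H * X * (F * Y - Y * F)
        - F * (X * Y - Y * X) + F * (F * X - (X * F + Y)) * X
        + F * X * (F * X - (X * F + Y)) := by
    unfold T; simp only [mul_add, add_mul, mul_sub, sub_mul, mul_assoc]; noncomm_ring
  rw [key, Dxy, Dfy, Dhf, Dfx, Def]
  simp

lemma comm_H : T * H = H * T := by
  rw [← sub_eq_zero]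
  have key : T * H - H * T =
      -((H * E - (E * H + 2 * E)) * Y * Y) - E * (H * Y - (Y * H - Y)) * Y
        - E * Y * (H * Y - (Y * H - Y)) - H * (H * X - (X * H + X)) * Y
        - H * X * (H * Y - (Y * H - Y)) + (H * F - (F * H - 2 * F)) * X * X
        + F * (H * X - (X * H + X)) * X + F * X * (H * X - (X * H + X)) := by
    unfold T; simp only [mul_add, add_mul, mul_sub, sub_mul, mul_assoc]; noncomm_ring
  rw [key, Dhe, Dhy, Dhx, Dhf]
  simp

lemma comm_all (b : Hz 0) : b * T = T * b := by
  obtain ⟨w, rfl⟩ := RingQuot.mkAlgHom_surjective ℂ (HRel 0) b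
  induction w using FreeAlgebra.induction with
  | grade0 r =>
    simp only [AlgHom.commutes]
    exact (Algebra.commutes r T).symm ▸ Algebra.commutes r T
  | grade1 i =>
    fin_cases i
    · exact (comm_E).symm
    · exact (comm_H).symm
    · exact (comm_F).symm
    · exact (comm_X).symm
    · exact (comm_Y).symm
  | mul a b ha hb =>
    rw [map_mul, mul_assoc, hb, ← mul_assoc, ha, mul_assoc]
  | add a b ha hb =>
    rw [map_add, add_mul, mul_add, ha, hb]

end TCentralAux

/-- In U(sl₂ ⋉ V), the element t = ey² + hxy − fx² is central. -/
theorem t_central :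
    π 0 ge * π 0 gy ^ 2 + π 0 gh * π 0 gx * π 0 gy - π 0 gf * π 0 gx ^ 2
      ∈ Subalgebra.center ℂ (Hz 0) := by
  rw [Subalgebra.mem_center_iff]
  intro b
  exact TCentralAux.comm_all b

end
end

section
/- Let H_z be the algebra generated by e, h, f, x, y with the sl2 relations, the standard action relations [e,y]=x, [f,x]=y, [h,x]=x, [h,y]=−y, [e,x]=[f,y]=0, and [x,y]=z where z is a fixed central element of U(sl2). Then the element t = ey² + hxy − fx² satisfies [e, t] = −ez, and consequently [e, t − (1/2)hz] = 0. -/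
noncomputable section

open Polynomial

section Aux

variable (z : F5)

local notation "E" => π z ge
local notation "H" => π z gh
local notation "Fq" => π z gf
local notation "X" => π z gx
local notation "Y" => π z gy

lemma relq {a b : F5} (h : HRel z a b) : π z a = π z b := RingQuot.mkAlgHom_rel ℂ h

lemma he0 : H * E = E * H + 2 * E := by
  have := relq z (HRel.he (z := z))
  simpa only [map_mul, map_add, map_ofNat] using this
lemma hf0 : H * Fq = Fq * H - 2 * Fq := by
  have := relq z (HRel.hf (z := z))
  simpa only [map_mul, map_sub, map_ofNat] using this
lemma ef0 : E * Fq = Fq * E + H := by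
  have := relq z (HRel.ef (z := z)); simpa using this
lemma ex0 : E * X = X * E := by
  have := relq z (HRel.ex (z := z)); simpa using this
lemma ey0 : E * Y = Y * E + X := by
  have := relq z (HRel.ey (z := z)); simpa using this
lemma fx0 : Fq * X = X * Fq + Y := by
  have := relq z (HRel.fx (z := z)); simpa using this
lemma fy0 : Fq * Y = Y * Fq := by
  have := relq z (HRel.fy (z := z)); simpa using this
lemma hx0 : H * X = X * H + X := by
  have := relq z (HRel.hx (z := z)); simpa using this
lemma hy0 : H * Y = Y * H - Y := by
  have := relq z (HRel.hy (z := z)); simpa using this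
lemma xy0 : X * Y = Y * X + π z z := by
  have := relq z (HRel.xy (z := z)); simpa using this

lemma he1 (w : Hz z) : H * (E * w) = E * (H * w) + 2 * (E * w) := by
  rw [← mul_assoc, he0, add_mul, mul_assoc, mul_assoc]
lemma hf1 (w : Hz z) : H * (Fq * w) = Fq * (H * w) - 2 * (Fq * w) := by
  rw [← mul_assoc, hf0, sub_mul, mul_assoc, mul_assoc]
lemma ef1 (w : Hz z) : E * (Fq * w) = Fq * (E * w) + H * w := by
  rw [← mul_assoc, ef0, add_mul, mul_assoc]
lemma ex1 (w : Hz z) : E * (X * w) = X * (E * w) := by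
  rw [← mul_assoc, ex0, mul_assoc]
lemma ey1 (w : Hz z) : E * (Y * w) = Y * (E * w) + X * w := by
  rw [← mul_assoc, ey0, add_mul, mul_assoc]
lemma fx1 (w : Hz z) : Fq * (X * w) = X * (Fq * w) + Y * w := by
  rw [← mul_assoc, fx0, add_mul, mul_assoc]
lemma fy1 (w : Hz z) : Fq * (Y * w) = Y * (Fq * w) := by
  rw [← mul_assoc, fy0, mul_assoc]
lemma hx1 (w : Hz z) : H * (X * w) = X * (H * w) + X * w := by
  rw [← mul_assoc, hx0, add_mul, mul_assoc]
lemma hy1 (w : Hz z) : H * (Y * w) = Y * (H * w) - Y * w := by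
  rw [← mul_assoc, hy0, sub_mul, mul_assoc]
lemma xy1 (w : Hz z) : X * (Y * w) = Y * (X * w) + π z z * w := by
  rw [← mul_assoc, xy0, add_mul, mul_assoc]

lemma mul2 (a : Hz z) : (2 : Hz z) * a = a + a := two_mul a
lemma mul4 (a : Hz z) : (4 : Hz z) * a = a + a + (a + a) := by
  rw [show (4 : Hz z) = 2 + 2 by norm_num, add_mul, two_mul]
lemma mul2' (a : Hz z) : a * (2 : Hz z) = a + a := mul_two a
lemma mul4' (a : Hz z) : a * (4 : Hz z) = a + a + (a + a) := by
  rw [show (4 : Hz z) = 2 + 2 by norm_num, mul_add, mul_two]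

set_option maxRecDepth 8000 in
/-- Δ commutes with e. -/
lemma DE : π z gΔ * E = E * π z gΔ := by
  simp only [gΔ, map_sub, map_add, map_mul, map_ofNat]
  simp only [mul_add, add_mul, mul_sub, sub_mul, mul_assoc, mul2, mul4, mul2', mul4', he0, he1, hf0, hf1, ef0, ef1]
  noncomm_ring

set_option maxRecDepth 8000 in
/-- Δ commutes with h. -/
lemma DH : π z gΔ * H = H * π z gΔ := by
  simp only [gΔ, map_sub, map_add, map_mul, map_ofNat]
  simp only [mul_add, add_mul, mul_sub, sub_mul, mul_assoc, mul2, mul4, mul2', mul4', he0, he1, hf0, hf1, ef0, ef1]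
  noncomm_ring

end Aux

lemma commute_aeval {A : Type*} [Ring A] [Algebra ℂ A] {a b : A} (h : Commute a b)
    (p : Polynomial ℂ) : Commute a (Polynomial.aeval b p) := by
  refine Polynomial.induction_on p ?_ ?_ ?_
  · intro c; simp only [aeval_C]; exact Algebra.commute_algebraMap_right c a
  · intro q r hq hr; simp only [map_add]; exact hq.add_right hr
  · intro n c hc
    simp only [map_mul, aeval_C, aeval_X_pow]
    exact (Algebra.commute_algebraMap_right c a).mul_right (h.pow_right (n + 1))

/-- In H_z (z a polynomial in Δ, i.e. a central element of U(sl₂)),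
t = ey² + hxy − fx² satisfies [e,t] = −ez, and hence [e, t − (1/2)hz] = 0. -/
theorem e_t_comm_Hz (p : Polynomial ℂ) :
    let z : F5 := Polynomial.aeval gΔ p
    let E := π z ge; let H := π z gh; let Fl := π z gf
    let Xl := π z gx; let Yl := π z gy
    let Z : Hz z := Polynomial.aeval (π z gΔ) p
    let t := E * Yl ^ 2 + H * Xl * Yl - Fl * Xl ^ 2
    E * t - t * E = -(E * Z) ∧
    E * (t - (1/2 : ℂ) • (H * Z)) - (t - (1/2 : ℂ) • (H * Z)) * E = 0 := by
  intro z E H Fl Xl Yl Z t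
  have hπz : π z z = Z := (Polynomial.aeval_algHom_apply (π z) gΔ p).symm
  have hED : Commute E (π z gΔ) := (DE z).symm
  have hHD : Commute H (π z gΔ) := (DH z).symm
  have hEZ : Commute E Z := commute_aeval hED p
  have hHZ : Commute H Z := commute_aeval hHD p
  have zE0 : Z * E = E * Z := hEZ.symm
  have zE1 : ∀ w : Hz z, Z * (E * w) = E * (Z * w) := by
    intro w; rw [← mul_assoc, zE0, mul_assoc]
  have zH0 : Z * H = H * Z := hHZ.symm
  have zH1 : ∀ w : Hz z, Z * (H * w) = H * (Z * w) := by
    intro w; rw [← mul_assoc, zH0, mul_assoc]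
  have h1 : E * t - t * E = -(E * Z) := by
    show E * (E * Yl ^ 2 + H * Xl * Yl - Fl * Xl ^ 2)
        - (E * Yl ^ 2 + H * Xl * Yl - Fl * Xl ^ 2) * E = -(E * Z)
    simp only [E, H, Fl, Xl, Yl] at zE0 zE1 zH0 zH1 ⊢
    simp only [pow_two, hπz, mul_add, add_mul, mul_sub, sub_mul, mul_assoc,
      he0 z, he1 z, hf0 z, hf1 z, ef0 z, ef1 z, ex0 z, ex1 z, ey0 z, ey1 z,
      fx0 z, fx1 z, fy0 z, fy1 z, hx0 z, hx1 z, hy0 z, hy1 z, xy0 z, xy1 z,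
      mul2 z, mul4 z, mul2' z, mul4' z, zE0, zE1, zH0, zH1]
    noncomm_ring
  have key : E * (H * Z) = (H * Z) * E - 2 * (E * Z) := by
    have : E * H = H * E - 2 * E := by rw [he0 z]; noncomm_ring
    calc E * (H * Z) = (E * H) * Z := by rw [mul_assoc]
      _ = (H * E - 2 * E) * Z := by rw [this]
      _ = H * (E * Z) - 2 * (E * Z) := by rw [sub_mul, mul_assoc, mul_assoc]
      _ = H * (Z * E) - 2 * (E * Z) := by rw [zE0]
      _ = (H * Z) * E - 2 * (E * Z) := by rw [mul_assoc]
  constructor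
  · exact h1
  · have expand : E * (t - (1/2 : ℂ) • (H * Z)) - (t - (1/2 : ℂ) • (H * Z)) * E
        = (E * t - t * E) - (1/2 : ℂ) • (E * (H * Z) - (H * Z) * E) := by
      simp only [mul_sub, sub_mul, mul_smul_comm, smul_mul_assoc, smul_sub]
      abel
    rw [expand, h1, key]
    have : (H * Z) * E - 2 * (E * Z) - (H * Z) * E = -(2 * (E * Z)) := by abel
    rw [this]
    rw [smul_neg]
    have : (1/2 : ℂ) • (2 * (E * Z)) = E * Z := by
      rw [show (2 : Hz z) * (E * Z) = (2 : ℂ) • (E * Z) by simp [two_smul, two_mul],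
        smul_smul]
      norm_num
    rw [this]; abel
end
end

section
/- In U(sl2), any element of the center Z(U(sl2)) that commutes with x in U(sl2 ⋉ V) must be a scalar. Equivalently, if p(Δ) is a polynomial in the Casimir-type element Δ = h² + 4ef − 2h and [p(Δ), x] = 0, then p(Δ) is a constant. -/
noncomputable section

open Polynomial

/-! ### A polynomial representation of U(sl₂ ⋉ V)

We represent the algebra on ℂ[x₀,x₁]: e = x₀∂₁, h = x₀∂₀ − x₁∂₁, f = x₁∂₀,
x = (x₀·), y = (x₁·). -/

open MvPolynomial

abbrev P2 : Type := MvPolynomial (Fin 2) ℂ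
abbrev A2 : Type := Module.End ℂ P2

def Dv (i : Fin 2) : A2 := (MvPolynomial.pderiv i).toLinearMap
def Mv (i : Fin 2) : A2 := LinearMap.mulLeft ℂ (MvPolynomial.X i)

@[simp] lemma Dv_apply (i : Fin 2) (q : P2) : Dv i q = pderiv i q := rfl
@[simp] lemma Mv_apply (i : Fin 2) (q : P2) : Mv i q = X i * q := rfl

lemma pderiv_pderiv_X (i j : Fin 2) (k : Fin 2) :
    pderiv i (pderiv j (X k : P2)) = 0 := by
  rcases eq_or_ne k j with h | h
  · subst h; simp
  · simp [pderiv_X_of_ne h]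

lemma pderiv_comm' (i j : Fin 2) (q : P2) :
    pderiv i (pderiv j q) = pderiv j (pderiv i q) := by
  induction q using MvPolynomial.induction_on with
  | C a => simp
  | add f g hf hg => simp [hf, hg]
  | mul_X f k ih =>
    simp only [pderiv_mul, map_add, ih, pderiv_pderiv_X]
    ring

/-- Images of the generators e, h, f, x, y. -/
def ops : Fin 5 → A2 :=
  ![Mv 0 * Dv 1, Mv 0 * Dv 0 - Mv 1 * Dv 1, Mv 1 * Dv 0, Mv 0, Mv 1]

def Φ : F5 →ₐ[ℂ] A2 := FreeAlgebra.lift ℂ ops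

lemma Φ_rel : ∀ ⦃a b : F5⦄, HRel 0 a b → Φ a = Φ b := by
  intro a b h
  induction h <;>
  · apply LinearMap.ext; intro q
    simp only [ge, gh, gf, gx, gy, map_mul, map_add, map_sub, map_zero, map_ofNat,
      Φ, FreeAlgebra.lift_ι_apply, ops,
      Matrix.cons_val_zero, Matrix.cons_val_one, Matrix.head_cons, Matrix.cons_val_two,
      Matrix.tail_cons, Matrix.cons_val_three, Matrix.cons_val_four, Matrix.cons_val_fin_one]
    have h2 : ∀ r : P2, (2 : A2) r = 2 • r := fun r => rfl
    have h01 : pderiv (0 : Fin 2) (X 1 : P2) = 0 := pderiv_X_of_ne (by decide)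
    have h10 : pderiv (1 : Fin 2) (X 0 : P2) = 0 := pderiv_X_of_ne (by decide)
    simp only [Module.End.mul_apply, LinearMap.add_apply, LinearMap.sub_apply, h2,
      LinearMap.zero_apply, Mv_apply, Dv_apply, pderiv_mul, pderiv_X_self, map_add, map_sub,
      map_mul, h01, h10, pderiv_comm' 0 1 q]
    ring

/-- The representation of U(sl₂ ⋉ V) on ℂ[x₀,x₁]. -/
def ρ : Hz 0 →ₐ[ℂ] A2 := RingQuot.liftAlgHom ℂ ⟨Φ, Φ_rel⟩

lemma ρ_π (w : F5) : ρ (π 0 w) = Φ w := by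
  simp [ρ, π, RingQuot.liftAlgHom_mkAlgHom_apply]

/-- Eigenvalues of Δ on ℂ[x₀,x₁]. -/
def μ (n : ℕ) : ℂ := (n : ℂ) ^ 2 + 2 * n

lemma pd0_pow (k : ℕ) :
    pderiv (0 : Fin 2) ((X 0 : P2) ^ (k + 1)) = MvPolynomial.C ((k : ℂ) + 1) * X 0 ^ k := by
  have : ((k + 1 : ℕ) : P2) = MvPolynomial.C ((k : ℂ) + 1) := by push_cast; simp
  simp [pderiv_pow, pderiv_X_self, this]

lemma pd1_pow (n : ℕ) : pderiv (1 : Fin 2) ((X 0 : P2) ^ n) = 0 := by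
  simp [pderiv_pow, pderiv_X_of_ne (show (0 : Fin 2) ≠ 1 by decide)]

lemma H_pow (n : ℕ) : ops 1 ((X 0 : P2) ^ n) = (n : ℂ) • (X 0 : P2) ^ n := by
  cases n with
  | zero => simp [ops]
  | succ k =>
    simp only [ops, Matrix.cons_val_one, Matrix.cons_val_zero, Matrix.head_cons, LinearMap.sub_apply,
      Module.End.mul_apply, Mv_apply, Dv_apply, pd0_pow, pd1_pow, mul_zero, sub_zero,
      MvPolynomial.smul_eq_C_mul]
    push_cast
    ring

lemma EF_pow (n : ℕ) : ops 0 (ops 2 ((X 0 : P2) ^ n)) = (n : ℂ) • (X 0 : P2) ^ n := by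
  cases n with
  | zero => simp [ops]
  | succ k =>
    have h1 : ops 2 ((X 0 : P2) ^ (k + 1)) = X 1 * (MvPolynomial.C ((k : ℂ) + 1) * X 0 ^ k) := by
      simp [ops, pd0_pow]
    rw [h1]
    simp only [ops, Matrix.cons_val_zero, Module.End.mul_apply, Mv_apply, Dv_apply,
      pderiv_mul, pderiv_X_self, pderiv_C, pd1_pow,
      pderiv_X_of_ne (show (0 : Fin 2) ≠ 1 by decide), MvPolynomial.smul_eq_C_mul]
    push_cast
    ring

lemma ΦΔ_pow (n : ℕ) : Φ gΔ ((X 0 : P2) ^ n) = μ n • (X 0 : P2) ^ n := by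
  have hE : Φ gΔ = ops 1 * ops 1 + 4 * (ops 0 * ops 2) - 2 * ops 1 := by
    simp [gΔ, ge, gh, gf, map_mul, map_add, map_sub, map_ofNat, Φ, FreeAlgebra.lift_ι_apply]
  have h2 : ∀ r : P2, (2 : A2) r = (2 : ℂ) • r := fun r => by
    rw [← map_ofNat (algebraMap ℂ A2) 2, Module.algebraMap_end_apply]
  have h4 : ∀ r : P2, (4 : A2) r = (4 : ℂ) • r := fun r => by
    rw [← map_ofNat (algebraMap ℂ A2) 4, Module.algebraMap_end_apply]
  rw [hE]
  simp only [LinearMap.add_apply, LinearMap.sub_apply, Module.End.mul_apply, h2, h4,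
    EF_pow, H_pow, map_smul, smul_smul]
  rw [μ, ← add_smul, ← sub_smul]
  ring_nf

lemma μ_injective : Function.Injective μ := by
  intro a b h
  have h' : (a : ℂ) ^ 2 + 2 * a = (b : ℂ) ^ 2 + 2 * b := h
  have h2 : ((a ^ 2 + 2 * a : ℕ) : ℂ) = ((b ^ 2 + 2 * b : ℕ) : ℂ) := by
    push_cast; linear_combination h'
  have h3 : a ^ 2 + 2 * a = b ^ 2 + 2 * b := Nat.cast_injective h2
  nlinarith

lemma X0_pow_ne (n : ℕ) : ((X 0 : P2) ^ n) ≠ 0 :=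
  pow_ne_zero n (MvPolynomial.X_ne_zero 0)

/-- In U(sl₂ ⋉ V), a polynomial in Δ commuting with x must be a scalar. -/
theorem central_commuting_with_x_is_scalar (p : Polynomial ℂ) :
    Commute (Polynomial.aeval (π 0 gΔ) p) (π 0 gx) →
    ∃ c : ℂ, Polynomial.aeval (π 0 gΔ) p = algebraMap ℂ (Hz 0) c := by
  intro hcomm
  -- push the commutation relation through the representation ρ
  have hρ : Commute (Polynomial.aeval (Φ gΔ) p) (Φ gx) := by
    have := congrArg ρ hcomm.eq
    simpa [map_mul, ρ_π, Polynomial.aeval_algHom_apply, commute_iff_eq] using this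
  -- Δ has eigenvector X0^n with eigenvalue μ n
  have heig : ∀ n : ℕ, (Polynomial.aeval (Φ gΔ) p) ((X 0 : P2) ^ n)
      = Polynomial.eval (μ n) p • (X 0 : P2) ^ n := fun n =>
    Module.End.aeval_apply_of_hasEigenvector
      ⟨Module.End.mem_eigenspace_iff.2 (ΦΔ_pow n), X0_pow_ne n⟩
  -- x shifts X0^n to X0^(n+1), so eval (μ (n+1)) p = eval (μ n) p
  have hstep : ∀ n : ℕ, Polynomial.eval (μ (n + 1)) p = Polynomial.eval (μ n) p := by
    intro n
    have hx : Φ gx ((X 0 : P2) ^ n) = (X 0 : P2) ^ (n + 1) := by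
      simp [gx, Φ, FreeAlgebra.lift_ι_apply, ops, pow_succ, mul_comm]
    have := congrArg (fun T : A2 => T ((X 0 : P2) ^ n)) hρ.eq
    simp only [Module.End.mul_apply, hx, heig, map_smul] at this
    have hsub : (Polynomial.eval (μ (n + 1)) p - Polynomial.eval (μ n) p)
        • ((X 0 : P2) ^ (n + 1)) = 0 := by rw [sub_smul, this, sub_self]
    rcases smul_eq_zero.1 hsub with h | h
    · exact sub_eq_zero.1 h
    · exact absurd h (X0_pow_ne (n + 1))
  have hconst : ∀ n : ℕ, Polynomial.eval (μ n) p = Polynomial.eval (μ 0) p := by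
    intro n; induction n with
    | zero => rfl
    | succ k ih => rw [hstep k, ih]
  -- hence p - C (eval (μ 0) p) has infinitely many roots
  have hq : p - Polynomial.C (Polynomial.eval (μ 0) p) = 0 := by
    apply Polynomial.eq_zero_of_infinite_isRoot
    apply Set.infinite_of_injective_forall_mem (f := μ) μ_injective
    intro n
    simp [Polynomial.IsRoot, hconst n]
  have hp : p = Polynomial.C (Polynomial.eval (μ 0) p) := by
    linear_combination (norm := ring_nf) hq
  refine ⟨Polynomial.eval (μ 0) p, ?_⟩
  conv_lhs => rw [hp]
  rw [Polynomial.aeval_C]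
end
end

section
/- The polynomials f_n defined by the recursion f_{n+1}(T) = 2Tⁿ + f_n(T)(T − 1) − 2g_n(T), g_{n+1}(T) = −3Tⁿ + (T + 3)g_n(T) − 2f_n(T)T, f_1 = 2, g_1 = −3, satisfy: f_n has degree exactly n − 1 with leading coefficient 2n. -/
noncomputable section

open Polynomial

/-- The pair (f_{n+1}, g_{n+1}) of polynomials defined by f₁ = 2, g₁ = −3 and the
recursions f_{n+1} = 2Tⁿ + f_n(T−1) − 2g_n, g_{n+1} = −3Tⁿ + (T+3)g_n − 2f_nT.
Here `fg n = (f_{n+1}, g_{n+1})`. -/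
def fg : ℕ → Polynomial ℂ × Polynomial ℂ
  | 0 => (C 2, C (-3))
  | n + 1 =>
      (C 2 * X ^ (n + 1) + (fg n).1 * (X - 1) - 2 * (fg n).2,
       C (-3) * X ^ (n + 1) + (X + 3) * (fg n).2 - 2 * (fg n).1 * X)

lemma fg_aux (n : ℕ) :
    ((fg n).1).natDegree = n ∧ ((fg n).1).coeff n = 2 * ((n : ℂ) + 1) ∧
    ((fg n).2).natDegree = n ∧ ((fg n).2).coeff n = -(((n : ℂ) + 1) * (2 * n + 3)) := by
  induction n with
  | zero => simp [fg]
  | succ n ih =>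
    obtain ⟨hf, hfc, hg, hgc⟩ := ih
    have hf1 : ((fg n).1).coeff (n+1) = 0 :=
      coeff_eq_zero_of_natDegree_lt (by omega)
    have hg1 : ((fg n).2).coeff (n+1) = 0 :=
      coeff_eq_zero_of_natDegree_lt (by omega)
    have hFc : ((fg (n+1)).1).coeff (n+1) = 2 * ((n : ℂ) + 1 + 1) := by
      show (C 2 * X ^ (n + 1) + (fg n).1 * (X - 1) - 2 * (fg n).2).coeff (n+1) = _
      rw [mul_sub, mul_one]
      simp [coeff_sub, coeff_add, coeff_C_mul, coeff_X_pow, coeff_mul_X, hf1, hg1, hfc]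
      ring
    have hGc : ((fg (n+1)).2).coeff (n+1) = -(((n : ℂ) + 1 + 1) * (2 * (n+1) + 3)) := by
      show (C (-3) * X ^ (n + 1) + (X + 3) * (fg n).2 - 2 * (fg n).1 * X).coeff (n+1) = _
      rw [add_mul]
      simp [coeff_sub, coeff_add, coeff_C_mul, coeff_X_pow, coeff_mul_X, coeff_X_mul,
        mul_assoc, hf1, hg1, hfc, hgc]
      ring
    have hFd : ((fg (n+1)).1).natDegree ≤ n+1 := by
      show (C 2 * X ^ (n + 1) + (fg n).1 * (X - 1) - 2 * (fg n).2).natDegree ≤ n+1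
      apply le_trans (natDegree_sub_le _ _)
      simp only [max_le_iff]
      refine ⟨le_trans (natDegree_add_le _ _) ?_, ?_⟩
      · simp only [max_le_iff]
        constructor
        · apply le_trans (natDegree_mul_le)
          simp
        · apply le_trans (natDegree_mul_le)
          have : (X - 1 : Polynomial ℂ).natDegree ≤ 1 := by
            apply le_trans (natDegree_sub_le _ _); simp
          omega
      · apply le_trans (natDegree_mul_le)
        have : (2 : Polynomial ℂ).natDegree = 0 := by norm_num
        omega
    have hGd : ((fg (n+1)).2).natDegree ≤ n+1 := by
      show (C (-3) * X ^ (n + 1) + (X + 3) * (fg n).2 - 2 * (fg n).1 * X).natDegree ≤ n+1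
      apply le_trans (natDegree_sub_le _ _)
      simp only [max_le_iff]
      refine ⟨le_trans (natDegree_add_le _ _) ?_, ?_⟩
      · simp only [max_le_iff]
        constructor
        · apply le_trans (natDegree_mul_le)
          simp
        · apply le_trans (natDegree_mul_le)
          have : (X + 3 : Polynomial ℂ).natDegree ≤ 1 := by
            apply le_trans (natDegree_add_le _ _); simp
          omega
      · apply le_trans (natDegree_mul_le)
        have h2 : ((2 : Polynomial ℂ) * (fg n).1).natDegree ≤ n := by
          apply le_trans (natDegree_mul_le)
          have : (2 : Polynomial ℂ).natDegree = 0 := by norm_num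
          omega
        simp only [natDegree_X]
        omega
    have hFne : ((fg (n+1)).1).coeff (n+1) ≠ 0 := by
      rw [hFc]
      have h1 : ((n+2 : ℕ) : ℂ) ≠ 0 := Nat.cast_ne_zero.2 (by omega)
      push_cast at h1
      intro h; apply h1; linear_combination h/2
    have hGne : ((fg (n+1)).2).coeff (n+1) ≠ 0 := by
      rw [hGc]
      have h1 : ((n+2 : ℕ) : ℂ) ≠ 0 := Nat.cast_ne_zero.2 (by omega)
      have h2 : ((2*n+5 : ℕ) : ℂ) ≠ 0 := Nat.cast_ne_zero.2 (by omega)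
      push_cast at h1 h2
      intro h
      rcases mul_eq_zero.1 (neg_eq_zero.1 h) with h | h
      · apply h1; linear_combination h
      · apply h2; linear_combination h
    have hFdeg : ((fg (n+1)).1).natDegree = n+1 :=
      le_antisymm hFd (le_natDegree_of_ne_zero hFne)
    have hGdeg : ((fg (n+1)).2).natDegree = n+1 :=
      le_antisymm hGd (le_natDegree_of_ne_zero hGne)
    refine ⟨hFdeg, ?_, hGdeg, ?_⟩
    · rw [hFc]; push_cast; ring
    · rw [hGc]; push_cast; ring

/-- f_n has degree exactly n − 1 with leading coefficient 2n
(in the shifted indexing: f_{n+1} = (fg n).1 has degree n and leading coefficient 2(n+1)). -/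
theorem fg_degree_leadingCoeff (n : ℕ) :
    ((fg n).1).natDegree = n ∧ ((fg n).1).leadingCoeff = 2 * ((n : ℂ) + 1) := by
  obtain ⟨h1, h2, _, _⟩ := fg_aux n
  exact ⟨h1, by rw [leadingCoeff, h1, h2]⟩
end
end

section
/- Let z = aΔ + b with a, b ∈ C, where Δ = h² + 4ef − 2h. Then the element ey² + hxy − fx² − (1/2)h(aΔ + b) + (1/4)(aΔ² + (2b − a)Δ) is central in the infinitesimal Hecke algebra H_z. -/
set_option maxRecDepth 8000


noncomputable section

open Polynomial

namespace CentralAux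

variable (a b : ℂ)

def zz (a b : ℂ) : F5 := a • gΔ + algebraMap ℂ F5 b

def qe : Hz (zz a b) := π _ ge
def qh : Hz (zz a b) := π _ gh
def qf : Hz (zz a b) := π _ gf
def qx : Hz (zz a b) := π _ gx
def qy : Hz (zz a b) := π _ gy
def qD : Hz (zz a b) := π _ gΔ

lemma rel_he : qh a b * qe a b = qe a b * qh a b + (2:ℂ) • qe a b := by
  have h := RingQuot.mkAlgHom_rel ℂ (HRel.he (z := zz a b))
  simpa [qe, qh, π, Algebra.smul_def, map_ofNat] using h

lemma rel_hf : qh a b * qf a b = qf a b * qh a b - (2:ℂ) • qf a b := by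
  have h := RingQuot.mkAlgHom_rel ℂ (HRel.hf (z := zz a b))
  simpa [qf, qh, π, Algebra.smul_def, map_ofNat] using h

lemma rel_fe : qf a b * qe a b = qe a b * qf a b - qh a b := by
  have h := RingQuot.mkAlgHom_rel ℂ (HRel.ef (z := zz a b))
  simp only [map_mul, map_add] at h
  have h' : qe a b * qf a b = qf a b * qe a b + qh a b := h
  rw [h', add_sub_cancel_right]

lemma rel_xe : qx a b * qe a b = qe a b * qx a b := by
  have h := RingQuot.mkAlgHom_rel ℂ (HRel.ex (z := zz a b))
  simp only [map_mul] at h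
  exact h.symm

lemma rel_ye : qy a b * qe a b = qe a b * qy a b - qx a b := by
  have h := RingQuot.mkAlgHom_rel ℂ (HRel.ey (z := zz a b))
  simp only [map_mul, map_add] at h
  have h' : qe a b * qy a b = qy a b * qe a b + qx a b := h
  rw [h', add_sub_cancel_right]

lemma rel_xf : qx a b * qf a b = qf a b * qx a b - qy a b := by
  have h := RingQuot.mkAlgHom_rel ℂ (HRel.fx (z := zz a b))
  simp only [map_mul, map_add] at h
  have h' : qf a b * qx a b = qx a b * qf a b + qy a b := h
  rw [h', add_sub_cancel_right]

lemma rel_yf : qy a b * qf a b = qf a b * qy a b := by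
  have h := RingQuot.mkAlgHom_rel ℂ (HRel.fy (z := zz a b))
  simp only [map_mul] at h
  exact h.symm

lemma rel_xh : qx a b * qh a b = qh a b * qx a b - qx a b := by
  have h := RingQuot.mkAlgHom_rel ℂ (HRel.hx (z := zz a b))
  simp only [map_mul, map_add] at h
  have h' : qh a b * qx a b = qx a b * qh a b + qx a b := h
  rw [h', add_sub_cancel_right]

lemma rel_yh : qy a b * qh a b = qh a b * qy a b + qy a b := by
  have h := RingQuot.mkAlgHom_rel ℂ (HRel.hy (z := zz a b))
  simp only [map_mul, map_sub] at h
  have h' : qh a b * qy a b = qy a b * qh a b - qy a b := h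
  rw [h', sub_add_cancel]

lemma qD_eq : qD a b
    = qh a b * qh a b + (4:ℂ) • (qe a b * qf a b) - (2:ℂ) • qh a b := by
  simp [qD, gΔ, qe, qh, qf, π, map_sub, map_add, map_mul,
    Algebra.smul_def, map_ofNat]

lemma map_zz : π (zz a b) (zz a b)
    = a • (qh a b * qh a b + (4:ℂ) • (qe a b * qf a b) - (2:ℂ) • qh a b)
      + b • (1 : Hz (zz a b)) := by
  rw [show π (zz a b) (zz a b) = π (zz a b) (a • gΔ + algebraMap ℂ F5 b) from rfl,
    map_add, map_smul, AlgHom.commutes, Algebra.algebraMap_eq_smul_one,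
    show π (zz a b) gΔ = qD a b from rfl, qD_eq]

lemma rel_yx : qy a b * qx a b = qx a b * qy a b
    - (a • (qh a b * qh a b + (4:ℂ) • (qe a b * qf a b) - (2:ℂ) • qh a b)
      + b • (1 : Hz (zz a b))) := by
  have h := RingQuot.mkAlgHom_rel ℂ (HRel.xy (z := zz a b))
  simp only [map_mul, map_add] at h
  have h' : qx a b * qy a b = qy a b * qx a b + π (zz a b) (zz a b) := h
  rw [h', map_zz, add_sub_cancel_right]

variable {a b}
variable (c : Hz (zz a b))

lemma rel_he' : qh a b * (qe a b * c) = qe a b * (qh a b * c) + (2:ℂ) • (qe a b * c) := by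
  rw [← mul_assoc, rel_he]; simp [add_mul, smul_mul_assoc, mul_assoc]

lemma rel_hf' : qh a b * (qf a b * c) = qf a b * (qh a b * c) - (2:ℂ) • (qf a b * c) := by
  rw [← mul_assoc, rel_hf]; simp [sub_mul, smul_mul_assoc, mul_assoc]

lemma rel_fe' : qf a b * (qe a b * c) = qe a b * (qf a b * c) - qh a b * c := by
  rw [← mul_assoc, rel_fe]; simp [sub_mul, mul_assoc]

lemma rel_xe' : qx a b * (qe a b * c) = qe a b * (qx a b * c) := by
  rw [← mul_assoc, rel_xe, mul_assoc]

lemma rel_ye' : qy a b * (qe a b * c) = qe a b * (qy a b * c) - qx a b * c := by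
  rw [← mul_assoc, rel_ye]; simp [sub_mul, mul_assoc]

lemma rel_xf' : qx a b * (qf a b * c) = qf a b * (qx a b * c) - qy a b * c := by
  rw [← mul_assoc, rel_xf]; simp [sub_mul, mul_assoc]

lemma rel_yf' : qy a b * (qf a b * c) = qf a b * (qy a b * c) := by
  rw [← mul_assoc, rel_yf, mul_assoc]

lemma rel_xh' : qx a b * (qh a b * c) = qh a b * (qx a b * c) - qx a b * c := by
  rw [← mul_assoc, rel_xh]; simp [sub_mul, mul_assoc]

lemma rel_yh' : qy a b * (qh a b * c) = qh a b * (qy a b * c) + qy a b * c := by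
  rw [← mul_assoc, rel_yh]; simp [add_mul, mul_assoc]

lemma rel_yx' : qy a b * (qx a b * c) = qx a b * (qy a b * c)
    - (a • (qh a b * (qh a b * c) + (4:ℂ) • (qe a b * (qf a b * c)) - (2:ℂ) • (qh a b * c))
      + b • c) := by
  rw [← mul_assoc, rel_yx]
  simp [sub_mul, add_mul, smul_mul_assoc, smul_sub, smul_add, mul_assoc]

variable (a b)

def Cel : Hz (zz a b) :=
  qe a b * qy a b ^ 2 + qh a b * qx a b * qy a b - qf a b * qx a b ^ 2
    - (1/2 : ℂ) • (qh a b * (a • qD a b + algebraMap ℂ (Hz (zz a b)) b))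
    + (1/4 : ℂ) • (a • qD a b ^ 2 + (2 * b - a) • qD a b)

lemma comm_e : qe a b * Cel a b = Cel a b * qe a b := by
  simp only [Cel, qD_eq, Algebra.algebraMap_eq_smul_one, pow_two,
    mul_add, add_mul, mul_sub, sub_mul, smul_add, smul_sub,
    mul_smul_comm, smul_mul_assoc, smul_smul, mul_one, one_mul, mul_assoc,
    rel_he', rel_hf', rel_fe', rel_xe', rel_ye', rel_xf', rel_yf', rel_xh', rel_yh', rel_yx',
    rel_he, rel_hf, rel_fe, rel_xe, rel_ye, rel_xf, rel_yf, rel_xh, rel_yh, rel_yx]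
  module

lemma comm_h : qh a b * Cel a b = Cel a b * qh a b := by
  simp only [Cel, qD_eq, Algebra.algebraMap_eq_smul_one, pow_two,
    mul_add, add_mul, mul_sub, sub_mul, smul_add, smul_sub,
    mul_smul_comm, smul_mul_assoc, smul_smul, mul_one, one_mul, mul_assoc,
    rel_he', rel_hf', rel_fe', rel_xe', rel_ye', rel_xf', rel_yf', rel_xh', rel_yh', rel_yx',
    rel_he, rel_hf, rel_fe, rel_xe, rel_ye, rel_xf, rel_yf, rel_xh, rel_yh, rel_yx]
  module

lemma comm_f : qf a b * Cel a b = Cel a b * qf a b := by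
  simp only [Cel, qD_eq, Algebra.algebraMap_eq_smul_one, pow_two,
    mul_add, add_mul, mul_sub, sub_mul, smul_add, smul_sub,
    mul_smul_comm, smul_mul_assoc, smul_smul, mul_one, one_mul, mul_assoc,
    rel_he', rel_hf', rel_fe', rel_xe', rel_ye', rel_xf', rel_yf', rel_xh', rel_yh', rel_yx',
    rel_he, rel_hf, rel_fe, rel_xe, rel_ye, rel_xf, rel_yf, rel_xh, rel_yh, rel_yx]
  module

lemma comm_x : qx a b * Cel a b = Cel a b * qx a b := by
  simp only [Cel, qD_eq, Algebra.algebraMap_eq_smul_one, pow_two,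
    mul_add, add_mul, mul_sub, sub_mul, smul_add, smul_sub,
    mul_smul_comm, smul_mul_assoc, smul_smul, mul_one, one_mul, mul_assoc,
    rel_he', rel_hf', rel_fe', rel_xe', rel_ye', rel_xf', rel_yf', rel_xh', rel_yh', rel_yx',
    rel_he, rel_hf, rel_fe, rel_xe, rel_ye, rel_xf, rel_yf, rel_xh, rel_yh, rel_yx]
  module

lemma comm_y : qy a b * Cel a b = Cel a b * qy a b := by
  simp only [Cel, qD_eq, Algebra.algebraMap_eq_smul_one, pow_two,
    mul_add, add_mul, mul_sub, sub_mul, smul_add, smul_sub,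
    mul_smul_comm, smul_mul_assoc, smul_smul, mul_one, one_mul, mul_assoc,
    rel_he', rel_hf', rel_fe', rel_xe', rel_ye', rel_xf', rel_yf', rel_xh', rel_yh', rel_yx',
    rel_he, rel_hf, rel_fe, rel_xe, rel_ye, rel_xf, rel_yf, rel_xh, rel_yh, rel_yx]
  module

lemma comm_all (w : F5) : π (zz a b) w * Cel a b = Cel a b * π (zz a b) w := by
  induction w using FreeAlgebra.induction with
  | grade0 r =>
      rw [AlgHom.commutes]
      exact Algebra.commutes r (Cel a b)
  | grade1 i =>
      fin_cases i
      · exact comm_e a b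
      · exact comm_h a b
      · exact comm_f a b
      · exact comm_x a b
      · exact comm_y a b
  | mul u v hu hv => rw [map_mul, mul_assoc, hv, ← mul_assoc, hu, mul_assoc]
  | add u v hu hv => rw [map_add, add_mul, hu, hv, mul_add]

end CentralAux


/-- For z = aΔ + b, the element
ey² + hxy − fx² − (1/2)h(aΔ+b) + (1/4)(aΔ² + (2b−a)Δ) is central in H_z. -/
theorem central_element_linear_z (a b : ℂ) :
    let z : F5 := a • gΔ + algebraMap ℂ F5 b
    let E := π z ge; let H := π z gh; let Fl := π z gf
    let Xl := π z gx; let Yl := π z gy; let D := π z gΔ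
    E * Yl ^ 2 + H * Xl * Yl - Fl * Xl ^ 2
        - (1/2 : ℂ) • (H * (a • D + algebraMap ℂ (Hz z) b))
        + (1/4 : ℂ) • (a • D ^ 2 + (2 * b - a) • D)
      ∈ Subalgebra.center ℂ (Hz z) := by
  intro z E H Fl Xl Yl D
  show CentralAux.Cel a b ∈ Subalgebra.center ℂ (Hz (CentralAux.zz a b))
  rw [Subalgebra.mem_center_iff]
  intro g
  obtain ⟨w, rfl⟩ := RingQuot.mkAlgHom_surjective ℂ (HRel (CentralAux.zz a b)) g
  exact CentralAux.comm_all a b w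
end
end

section
/- In the infinitesimal Hecke algebra H_z, for any polynomial α = α(Δ) in the center of U(sl2), writing [α, x] = (F(α)h + G(α))x + 2F(α)ey with F(α), G(α) ∈ C[Δ], one has the identity [α, x]y − [α, y]x = 2F(α)(ey² + hxy − fx² − (1/2)hz) + G(α)z. -/
noncomputable section

open Polynomial

lemma bracket_aux {R : Type*} [Ring R] (E H Fl X Y Z Fa Ga W : R)
    (hxy : X * Y = Y * X + Z) (hW : 2 * Fa * W = Fa * (H * Z)) :
    ((Fa * H + Ga) * X + 2 * Fa * (E * Y)) * Y
      - (2 * Fa * (Fl * X) + (-(Fa * H) + Ga) * Y) * X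
      = 2 * Fa * (E * Y ^ 2 + H * X * Y - Fl * X ^ 2 - W) + Ga * Z := by
  rw [mul_sub, hW]
  calc ((Fa * H + Ga) * X + 2 * Fa * (E * Y)) * Y
        - (2 * Fa * (Fl * X) + (-(Fa * H) + Ga) * Y) * X
      = Fa * H * (X * Y) + Ga * (X * Y) + 2 * (Fa * (E * (Y * Y)))
          - 2 * (Fa * (Fl * (X * X))) + Fa * H * (Y * X) - Ga * (Y * X) := by
        noncomm_ring
    _ = Fa * H * (Y * X + Z) + Ga * (Y * X + Z) + 2 * (Fa * (E * (Y * Y)))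
          - 2 * (Fa * (Fl * (X * X))) + Fa * H * (Y * X) - Ga * (Y * X) := by
        rw [hxy]
    _ = 2 * Fa * (E * Y ^ 2 + H * (Y * X + Z) - Fl * X ^ 2) - Fa * (H * Z) + Ga * Z := by
        noncomm_ring
    _ = 2 * Fa * (E * Y ^ 2 + H * (X * Y) - Fl * X ^ 2) - Fa * (H * Z) + Ga * Z := by
        rw [hxy]
    _ = 2 * Fa * (E * Y ^ 2 + H * X * Y - Fl * X ^ 2) - Fa * (H * Z) + Ga * Z := by
        noncomm_ring

/-- In H_z, for α ∈ ℂ[Δ] with expansions [α(Δ), x] = (F(α)h + G(α))x + 2F(α)ey and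
[α(Δ), y] = 2F(α)fx + (−F(α)h + G(α))y, one has
[α(Δ),x]y − [α(Δ),y]x = 2F(α)(ey² + hxy − fx² − (1/2)hz) + G(α)z. -/
theorem bracket_identity (p α Fα Gα : Polynomial ℂ) :
    let z : F5 := Polynomial.aeval gΔ p
    let E := π z ge; let H := π z gh; let Fl := π z gf
    let Xl := π z gx; let Yl := π z gy; let D := π z gΔ
    let Z : Hz z := Polynomial.aeval D p
    let αD : Hz z := Polynomial.aeval D α
    let FαD : Hz z := Polynomial.aeval D Fα
    let GαD : Hz z := Polynomial.aeval D Gα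
    (αD * Xl - Xl * αD = (FαD * H + GαD) * Xl + 2 * FαD * (E * Yl)) →
    (αD * Yl - Yl * αD = 2 * FαD * (Fl * Xl) + (-(FαD * H) + GαD) * Yl) →
    (αD * Xl - Xl * αD) * Yl - (αD * Yl - Yl * αD) * Xl
      = 2 * FαD * (E * Yl ^ 2 + H * Xl * Yl - Fl * Xl ^ 2 - (1/2 : ℂ) • (H * Z))
        + GαD * Z := by
  intro z E H Fl Xl Yl D Z αD FαD GαD h1 h2
  have hZ : π z z = Z := (Polynomial.aeval_algHom_apply (π z) gΔ p).symm
  have hxy : Xl * Yl = Yl * Xl + Z := by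
    have h : π z (gx * gy) = π z (gy * gx + z) := RingQuot.mkAlgHom_rel ℂ HRel.xy
    rw [map_mul, map_add, map_mul, hZ] at h
    exact h
  have hhalf : (2 : Hz z) * FαD * ((1/2 : ℂ) • (H * Z)) = FαD * (H * Z) := by
    rw [mul_smul_comm, mul_assoc, two_mul, smul_add, ← add_smul]
    norm_num
  rw [h1, h2]
  exact bracket_aux E H Fl Xl Yl Z FαD GαD _ hxy hhalf
end
end
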